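/- Every nonidentity element of X has infinitely many conjugates in X, i.e. every nontrivial conjugacy class of X is infinite. -/

import Mathlib

/-- The two-element family of groups `A` (at `true`) and `B` (at `false`),
used to express the amalgamated free product `A *_C B` as a pushout. -/
def AmalgamFam (A B : Type) : Bool → Type
  | true => A
  | false => B

instance AmalgamFam.group (A B : Type) [Group A] [Group B] :
    (i : Bool) → Group (AmalgamFam A B i)
  | true => inferInstanceAs (Group A)
  | false => inferInstanceAs (Group B)

/-- The pair of homomorphisms `ιA : C →* A`, `ιB : C →* B` as a family. -/
def amalgamMaps {A B C : Type} [Group A] [Group B] [Group C]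
    (ιA : C →* A) (ιB : C →* B) : (i : Bool) → C →* AmalgamFam A B i
  | true => ιA
  | false => ιB

/-- The amalgamated free product `A *_C B`, i.e. the pushout of `ιA` and `ιB`. -/
def Amalgam {A B C : Type} [Group A] [Group B] [Group C]
    (ιA : C →* A) (ιB : C →* B) : Type :=
  Monoid.PushoutI (amalgamMaps ιA ιB)

instance {A B C : Type} [Group A] [Group B] [Group C] (ιA : C →* A) (ιB : C →* B) :
    Group (Amalgam ιA ιB) :=
  inferInstanceAs (Group (Monoid.PushoutI _))

/-- The canonical homomorphism `A →* A *_C B`. -/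
def Amalgam.inA {A B C : Type} [Group A] [Group B] [Group C]
    (ιA : C →* A) (ιB : C →* B) : A →* Amalgam ιA ιB :=
  Monoid.PushoutI.of (φ := amalgamMaps ιA ιB) true

/-- The canonical homomorphism `B →* A *_C B`. -/
def Amalgam.inB {A B C : Type} [Group A] [Group B] [Group C]
    (ιA : C →* A) (ιB : C →* B) : B →* Amalgam ιA ιB :=
  Monoid.PushoutI.of (φ := amalgamMaps ιA ιB) false

/-- The canonical homomorphism `C →* A *_C B`. -/
def Amalgam.inC {A B C : Type} [Group A] [Group B] [Group C]
    (ιA : C →* A) (ιB : C →* B) : C →* Amalgam ιA ιB :=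
  (Amalgam.inA ιA ιB).comp ιA

/-!
Write `X = A *_C B` and view `C` inside both factors. Since `C` is abelian while `Q` and `P` are
not, `C` is a proper self-normalizing, hence non-normal, subgroup of `A` and of `B`, so its index
in each factor is at least `3`.

An element of `X` outside `C` is a product of a nonempty reduced word (no letter in `C`, adjacent
letters from different factors). As `C` has a third coset in each factor, it is conjugate to a
reduced word that begins and ends in the same factor, and conjugating such a word by a letter of
the other factor lengthens it by two. By the normal form theorem reduced words of different
lengths represent different elements, so the conjugacy class is infinite.

A nontrivial `c ∈ C` has order divisible by `p` or `q`, so a power of `c` generates `S_p` or `S_q`.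
These subgroups are not normal in `A`, resp. `B`, so some conjugate of `c` in `A` or `B` leaves
`C`, and we are back in the first case.
-/

open Function

namespace Subgroup

variable {G : Type*} [Group G]

theorem exists_notMem_and_mul_inv_notMem {R : Subgroup G} (hR : R ≠ ⊤) (hR2 : R.index ≠ 2)
    (g : G) : ∃ b, b ∉ R ∧ g * b⁻¹ ∉ R := by
  by_contra! h
  obtain ⟨b₀, hb₀⟩ : ∃ b, b ∉ R := by simpa [eq_top_iff'] using hR
  have hg : g ∉ R := fun hg => hb₀ (by simpa using (R.mul_mem_cancel_left hg).mp (h b₀ hb₀))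
  refine hR2 (index_eq_two_iff.mpr ⟨g⁻¹, fun b => ?_⟩)
  by_cases hb : b ∈ R
  · simp [hb, R.mul_mem_cancel_left hb, hg]
  · have : b * g⁻¹ ∈ R := by simpa using R.inv_mem (h b hb)
    simp [hb, this]

theorem exists_conj_notMem_of_dvd_orderOf {R S : Subgroup G} {p : ℕ}
    (hS : ∀ D : Subgroup G, D ≤ R → Nat.card D = p → D = S) (hSn : ¬ S.Normal)
    {x : G} (hx : IsOfFinOrder x) (hpx : p ∣ orderOf x) :
    ∃ g, g * x * g⁻¹ ∉ R := by
  -- otherwise every conjugate of `y`, an element of order `p` in `R`, generates `S`,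
  -- so `S` is normal
  by_contra! hconj
  set y := x ^ (orderOf x / p)
  have hy : ∀ g : G, zpowers (g * y * g⁻¹) = S := fun g => by
    refine hS _ (zpowers_le.mpr ?_) ?_
    · rw [← conj_pow]
      exact pow_mem (hconj g) _
    · rw [Nat.card_zpowers, ← MulAut.conj_apply, MulEquiv.orderOf_eq,
        orderOf_pow_orderOf_div hx.orderOf_pos.ne' hpx]
  refine hSn ⟨fun s hs g => ?_⟩
  rw [← hy 1, one_mul, inv_one, mul_one] at hs
  obtain ⟨k, rfl⟩ := mem_zpowers_iff.mp hs
  rw [← conj_zpow, ← hy g]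
  exact zpow_mem (mem_zpowers _) k

theorem not_normal_of_normalizer_eq {R S : Subgroup G} (hS : normalizer (S : Set G) = R)
    (hR : R ≠ ⊤) : ¬ S.Normal :=
  fun h => hR (hS ▸ normalizer_eq_top_iff.mpr h)

theorem index_ne_two_of_normalizer_eq_self {R : Subgroup G} (h : normalizer (R : Set G) = R)
    (hR : R ≠ ⊤) : R.index ≠ 2 :=
  fun h2 => not_normal_of_normalizer_eq h hR (normal_of_index_eq_two h2)

end Subgroup

theorem Nat.Prime.dvd_or_dvd_of_dvd_mul_of_ne_one {p q n : ℕ} (hp : p.Prime) (hq : q.Prime)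
    (hn : n ∣ p * q) (hn1 : n ≠ 1) : p ∣ n ∨ q ∣ n := by
  obtain ⟨a, b, ha, hb, rfl⟩ := Nat.dvd_mul.mp hn
  rcases (Nat.dvd_prime hp).mp ha with rfl | rfl
  · rcases (Nat.dvd_prime hq).mp hb with rfl | rfl
    · exact absurd rfl hn1
    · exact Or.inr (dvd_mul_left _ _)
  · exact Or.inl (dvd_mul_right _ _)

theorem MonoidHom.range_ne_top_of_not_isMulCommutative {C G : Type*} [Group C] [Group G]
    [IsMulCommutative C] (ι : C →* G) {K : Subgroup G} (hK : ¬ IsMulCommutative K) :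
    ι.range ≠ ⊤ := by
  intro h
  refine hK ⟨⟨fun a b => Subtype.ext ?_⟩⟩
  exact setLike_mul_comm (s := ι.range) (h ▸ Subgroup.mem_top _)
    (h ▸ Subgroup.mem_top _)

namespace Monoid.PushoutI

open NormalWord CoprodI

section General

variable {ι H : Type*} {G : ι → Type*} [∀ i, Group (G i)] [Group H] {φ : ∀ i, H →* G i}

theorem of_mem_base_range_iff (hφ : ∀ i, Injective (φ i)) {i : ι} {g : G i} :
    of i g ∈ (base φ).range ↔ g ∈ (φ i).range := by
  constructor
  · rintro ⟨h, hh⟩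
    exact ⟨h, of_injective hφ i (by rw [of_apply_eq_base, hh])⟩
  · rintro ⟨h, rfl⟩
    exact ⟨h, (of_apply_eq_base φ i h).symm⟩

variable (φ) in
def listProd (l : List (Σ i, G i)) : PushoutI φ :=
  (l.map fun a => of a.1 a.2).prod

variable (φ) in
def ReducedList (l : List (Σ i, G i)) : Prop :=
  (∀ a ∈ l, a.2 ∉ (φ a.1).range) ∧ (l.map Sigma.fst).IsChain (· ≠ ·)

@[simp]
theorem listProd_nil : listProd φ ([] : List (Σ i, G i)) = 1 := rfl

@[simp]
theorem listProd_cons (a : Σ i, G i) (l : List (Σ i, G i)) :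
    listProd φ (a :: l) = of a.1 a.2 * listProd φ l := by
  simp [listProd]

@[simp]
theorem listProd_append (l₁ l₂ : List (Σ i, G i)) :
    listProd φ (l₁ ++ l₂) = listProd φ l₁ * listProd φ l₂ := by
  simp [listProd]

theorem ofCoprodI_word_prod (w : Word G) : ofCoprodI (φ := φ) w.prod = listProd φ w.toList := by
  simp [Word.prod, listProd, map_list_prod, Function.comp_def]

theorem ReducedList.exists_word {l : List (Σ i, G i)} (hl : ReducedList φ l) :
    ∃ w : Word G, w.toList = l ∧ Reduced φ w :=
  ⟨⟨l, fun a ha h1 => hl.1 a ha (h1 ▸ one_mem _), (List.isChain_map Sigma.fst).mp hl.2⟩,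
    rfl, hl.1⟩

theorem ReducedList.map_fst_eq_of_listProd_eq (hφ : ∀ i, Injective (φ i))
    {l₁ l₂ : List (Σ i, G i)} (h₁ : ReducedList φ l₁) (h₂ : ReducedList φ l₂)
    (h : listProd φ l₁ = listProd φ l₂) : l₁.map Sigma.fst = l₂.map Sigma.fst := by
  obtain ⟨d⟩ := transversal_nonempty φ hφ
  obtain ⟨w₁, rfl, hw₁⟩ := h₁.exists_word
  obtain ⟨w₂, rfl, hw₂⟩ := h₂.exists_word
  obtain ⟨v₁, hv₁, hm₁⟩ := hw₁.exists_normalWord_prod_eq d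
  obtain ⟨v₂, hv₂, hm₂⟩ := hw₂.exists_normalWord_prod_eq d
  have : v₁ = v₂ := prod_injective (by rw [hv₁, hv₂, ofCoprodI_word_prod, ofCoprodI_word_prod, h])
  rw [← hm₁, ← hm₂, this]

theorem exists_reducedList_listProd_eq (hφ : ∀ i, Injective (φ i)) {x : PushoutI φ}
    (hx : x ∉ (base φ).range) :
    ∃ l : List (Σ i, G i), ReducedList φ l ∧ l ≠ [] ∧ listProd φ l = x := by
  classical
  obtain ⟨d⟩ := transversal_nonempty φ hφ
  set w : NormalWord d := NormalWord.equiv x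
  have hwx : base φ w.head * listProd φ w.toList = x := by
    rw [← ofCoprodI_word_prod]
    exact NormalWord.equiv.symm_apply_apply x
  -- a letter of a normal word is a nontrivial element of the transversal,
  -- so it lies outside the base
  have hletters : ∀ a ∈ w.toList, a.2 ∉ (φ a.1).range := by
    rintro ⟨i, g⟩ ha hg
    refine w.ne_one _ ha (congrArg Subtype.val <|
      ((d.compl i).equiv_fst_eq_self_of_mem_of_one_mem (d.one_mem i) hg).symm.trans
      ((d.compl i).equiv_fst_eq_one_of_mem_of_one_mem (one_mem _) (w.normalized i g ha)))
  rcases hlist : w.toList with _ | ⟨⟨i, g⟩, t⟩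
  · exact absurd ⟨w.head, by simpa [hlist] using hwx⟩ hx
  · -- absorb the base part of the normal form into its first letter
    refine ⟨⟨i, φ i w.head * g⟩ :: t, ⟨?_, ?_⟩, List.cons_ne_nil _ _, ?_⟩
    · rintro a (_ | ⟨_, ha⟩)
      · exact fun hr => hletters _ (hlist ▸ List.mem_cons_self) <| by
          simpa using mul_mem (inv_mem ((φ i).mem_range.mpr ⟨w.head, rfl⟩)) hr
      · exact hletters a (hlist ▸ List.mem_cons_of_mem _ ha)
    · simpa [hlist] using (List.isChain_map Sigma.fst).mpr w.chain_ne
    · rw [← hwx, hlist, listProd_cons, listProd_cons, map_mul, of_apply_eq_base, mul_assoc]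

variable (ι) in
def BeginsEndsIn (i : ι) (l : List (Σ i, G i)) : Prop :=
  (l.map Sigma.fst).head? = some i ∧ (l.map Sigma.fst).getLast? = some i

theorem ReducedList.cons_append_singleton_inv {l : List (Σ i, G i)} {i j : ι} (hl : ReducedList φ l)
    (hi : BeginsEndsIn ι i l) (hji : j ≠ i) {c : G j} (hc : c ∉ (φ j).range) :
    ReducedList φ (⟨j, c⟩ :: l ++ [⟨j, c⁻¹⟩]) ∧ BeginsEndsIn ι j (⟨j, c⟩ :: l ++ [⟨j, c⁻¹⟩]) := by
  refine ⟨⟨?_, ?_⟩, by simp, by simp [List.getLast?_cons]⟩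
  · intro a ha
    simp only [List.mem_append, List.mem_cons, List.mem_nil_iff, or_false] at ha
    rcases ha with (rfl | ha) | rfl
    · exact hc
    · exact hl.1 a ha
    · exact inv_mem_iff.not.mpr hc
  · simp only [List.map_append, List.map_cons, List.map_nil]
    simp [List.isChain_append, List.isChain_cons, hi.1, hi.2, hl.2, hji, hji.symm]

theorem ReducedList.exists_isConj_beginsEndsIn (htop : ∀ i, (φ i).range ≠ ⊤)
    (hindex : ∀ i, (φ i).range.index ≠ 2) {l : List (Σ i, G i)} (hl : ReducedList φ l)
    (hlne : l ≠ []) :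
    ∃ l' i, ReducedList φ l' ∧ BeginsEndsIn ι i l' ∧ IsConj (listProd φ l) (listProd φ l') := by
  obtain ⟨i, hi⟩ : ∃ i, (l.map Sigma.fst).head? = some i := by
    cases l with
    | nil => contradiction
    | cons a _ => exact ⟨a.1, rfl⟩
  obtain ⟨m, ⟨j, e⟩, rfl⟩ : ∃ m a, l = m ++ [a] :=
    ⟨l.dropLast, l.getLast hlne, (List.dropLast_append_getLast hlne).symm⟩
  by_cases hij : i = j
  · exact ⟨m ++ [⟨j, e⟩], i, hl, ⟨hi, by simp [hij]⟩, .refl _⟩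
  -- conjugating by `b` gives `b * m * (e * b⁻¹)`, which begins and ends in `G j`
  obtain ⟨b, hb, heb⟩ := (φ j).range.exists_notMem_and_mul_inv_notMem (htop j) (hindex j) e
  refine ⟨⟨j, b⟩ :: m ++ [⟨j, e * b⁻¹⟩], j, ⟨?_, ?_⟩, ⟨by simp, by simp [List.getLast?_cons]⟩, ?_⟩
  · intro a ha
    simp only [List.mem_append, List.mem_cons, List.mem_nil_iff, or_false] at ha
    rcases ha with (rfl | ha) | rfl
    · exact hb
    · exact hl.1 a (List.mem_append_left _ ha)
    · exact heb
  · have hchain := hl.2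
    simp only [List.map_append, List.map_cons, List.map_nil] at hi hchain ⊢
    rw [List.cons_append, List.isChain_cons, hi]
    exact ⟨by simpa using Ne.symm hij, hchain⟩
  · refine isConj_iff.mpr ⟨of j b, ?_⟩
    simp [mul_assoc]

theorem ReducedList.exists_isConj_length_eq [Nontrivial ι] (htop : ∀ i, (φ i).range ≠ ⊤)
    (k : ℕ) {l : List (Σ i, G i)} {i : ι} (hl : ReducedList φ l) (hi : BeginsEndsIn ι i l) :
    ∃ l', ReducedList φ l' ∧ l'.length = l.length + 2 * k ∧
      IsConj (listProd φ l) (listProd φ l') := by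
  induction k generalizing l i with
  | zero => exact ⟨l, hl, rfl, .refl _⟩
  | succ k ih =>
    obtain ⟨j, hji⟩ := exists_ne i
    obtain ⟨c, hc⟩ : ∃ c, c ∉ (φ j).range := by simpa [Subgroup.eq_top_iff'] using htop j
    obtain ⟨hl', hj⟩ := hl.cons_append_singleton_inv hi hji hc
    obtain ⟨l', hl'', hlen, hconj⟩ := ih hl' hj
    refine ⟨l', hl'', by simp [hlen]; ring, IsConj.trans ?_ hconj⟩
    exact isConj_iff.mpr ⟨of j c, by simp [mul_assoc]⟩

theorem infinite_setOf_isConj [Nontrivial ι] (hφ : ∀ i, Injective (φ i))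
    (htop : ∀ i, (φ i).range ≠ ⊤) (hindex : ∀ i, (φ i).range.index ≠ 2) {x : PushoutI φ}
    (hx : x ∉ (base φ).range) : {y | IsConj x y}.Infinite := by
  obtain ⟨l, hl, hlne, rfl⟩ := exists_reducedList_listProd_eq hφ hx
  obtain ⟨l₀, i, hl₀, hi, hconj⟩ := hl.exists_isConj_beginsEndsIn htop hindex hlne
  choose f hf hlen hconjf using fun k => hl₀.exists_isConj_length_eq htop k hi
  refine Set.infinite_of_injective_forall_mem (f := fun k => listProd φ (f k))
    (fun k₁ k₂ h => ?_) (fun k => hconj.trans (hconjf k))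
  have := congrArg List.length ((hf k₁).map_fst_eq_of_listProd_eq hφ (hf k₂) h)
  simp only [List.length_map, hlen] at this
  omega

theorem infinite_setOf_isConj_base [Nontrivial ι] (hφ : ∀ i, Injective (φ i))
    (htop : ∀ i, (φ i).range ≠ ⊤) (hindex : ∀ i, (φ i).range.index ≠ 2) {h : H} {i : ι}
    {g : G i} (hg : g * φ i h * g⁻¹ ∉ (φ i).range) : {y | IsConj (base φ h) y}.Infinite := by
  have hconj : IsConj (base φ h) (of i (g * φ i h * g⁻¹)) :=
    isConj_iff.mpr ⟨of i g, by simp [of_apply_eq_base]⟩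
  exact (infinite_setOf_isConj hφ htop hindex ((of_mem_base_range_iff hφ).not.mpr hg)).mono
    fun y hy => hconj.trans hy

end General

end Monoid.PushoutI

theorem amalgam_conjugacy_classes_infinite_general
    (p q : ℕ) (hp : p.Prime) (hq : q.Prime)
    {A B C : Type} [Group A] [Group B] [Group C]
    -- `Q` is a nonabelian normal Sylow `q`-subgroup of `A`,
    -- `P` is a nonabelian normal Sylow `p`-subgroup of `B`
    (Q : Sylow q A) (P : Sylow p B)
    (hQnonab : ¬ IsMulCommutative (Q : Subgroup A))
    (hPnonab : ¬ IsMulCommutative (P : Subgroup B))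
    -- `C` is cyclic of order `p * q`, embedded in `A` and `B`
    (hC : IsCyclic C) (hCcard : Nat.card C = p * q)
    (ιA : C →* A) (ιB : C →* B)
    (hιA : Function.Injective ιA) (hιB : Function.Injective ιB)
    -- `ιA(C)` is self-normalizing in `A`, contains `Z(Q)` as its unique subgroup of
    -- order `q`, and `A = Q * ιA(C)`
    (hCA_selfnorm : Subgroup.normalizer (ιA.range : Set A) = ιA.range)
    -- `ιB(C)` is self-normalizing in `B`, contains `Z(P)` as its unique subgroup of
    -- order `p`, and `B = P * ιB(C)`
    (hCB_selfnorm : Subgroup.normalizer (ιB.range : Set B) = ιB.range)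
    -- `SpA` is the unique subgroup of order `p` of `ιA(C)`, and
    -- `SqB` is the unique subgroup of order `q` of `ιB(C)`
    (SpA : Subgroup A)
    (hSpA_uniq : ∀ D : Subgroup A, D ≤ ιA.range → Nat.card D = p → D = SpA)
    (SqB : Subgroup B)
    (hSqB_uniq : ∀ D : Subgroup B, D ≤ ιB.range → Nat.card D = q → D = SqB)
    -- the normalizer conditions `N_B(S_q) = ιB(C)` and `N_A(S_p) = ιA(C)`
    (hSqB_norm : Subgroup.normalizer (SqB : Set B) = ιB.range)
    (hSpA_norm : Subgroup.normalizer (SpA : Set A) = ιA.range)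
    :
    ∀ x : Amalgam ιA ιB, x ≠ 1 → {y : Amalgam ιA ιB | IsConj x y}.Infinite := by
  intro x hx
  have hAtop := ιA.range_ne_top_of_not_isMulCommutative hQnonab
  have hBtop := ιB.range_ne_top_of_not_isMulCommutative hPnonab
  have hφ : ∀ i, Function.Injective (amalgamMaps ιA ιB i) := Bool.forall_bool.mpr ⟨hιB, hιA⟩
  have htop : ∀ i, (amalgamMaps ιA ιB i).range ≠ ⊤ := Bool.forall_bool.mpr ⟨hBtop, hAtop⟩
  have hindex : ∀ i, (amalgamMaps ιA ιB i).range.index ≠ 2 := Bool.forall_bool.mpr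
    ⟨Subgroup.index_ne_two_of_normalizer_eq_self hCB_selfnorm hBtop,
     Subgroup.index_ne_two_of_normalizer_eq_self hCA_selfnorm hAtop⟩
  by_cases hxr : x ∈ (Monoid.PushoutI.base (amalgamMaps ιA ιB)).range
  swap
  · exact Monoid.PushoutI.infinite_setOf_isConj hφ htop hindex hxr
  obtain ⟨c, rfl⟩ := hxr
  have : Finite C := Nat.finite_of_card_ne_zero (by simp [hCcard, hp.ne_zero, hq.ne_zero])
  have hc : orderOf c ≠ 1 := fun h => hx (by rw [orderOf_eq_one_iff.mp h]; exact map_one _)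
  rcases hp.dvd_or_dvd_of_dvd_mul_of_ne_one hq (hCcard ▸ orderOf_dvd_natCard c) hc with h | h
  · obtain ⟨g, hg⟩ := Subgroup.exists_conj_notMem_of_dvd_orderOf hSpA_uniq
      (Subgroup.not_normal_of_normalizer_eq hSpA_norm hAtop)
      (ιA.isOfFinOrder (isOfFinOrder_of_finite c)) (orderOf_injective ιA hιA c ▸ h)
    exact Monoid.PushoutI.infinite_setOf_isConj_base (i := true) hφ htop hindex hg
  · obtain ⟨g, hg⟩ := Subgroup.exists_conj_notMem_of_dvd_orderOf hSqB_uniq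
      (Subgroup.not_normal_of_normalizer_eq hSqB_norm hBtop)
      (ιB.isOfFinOrder (isOfFinOrder_of_finite c)) (orderOf_injective ιB hιB c ▸ h)
    exact Monoid.PushoutI.infinite_setOf_isConj_base (i := false) hφ htop hindex hg

/-- Every nonidentity element of `X = A *_C B` has infinitely many conjugates in `X`. -/
theorem amalgam_conjugacy_classes_infinite
    (p q : ℕ) (hp : p.Prime) (hq : q.Prime) (hpodd : Odd p) (hqodd : Odd q)
    (hpq : p ≠ q)
    {A B C : Type} [Group A] [Group B] [Group C] [Finite A] [Finite B]
    -- `Q` is a nonabelian normal Sylow `q`-subgroup of `A`,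
    -- `P` is a nonabelian normal Sylow `p`-subgroup of `B`
    (Q : Sylow q A) (P : Sylow p B)
    (hQnormal : (Q : Subgroup A).Normal) (hPnormal : (P : Subgroup B).Normal)
    (hQnonab : ¬ IsMulCommutative (Q : Subgroup A))
    (hPnonab : ¬ IsMulCommutative (P : Subgroup B))
    -- `ZQ = Z(Q)` has order `q` and `ZP = Z(P)` has order `p`
    (ZQ : Subgroup A)
    (hZQ : ZQ = (Q : Subgroup A) ⊓ Subgroup.centralizer ((Q : Subgroup A) : Set A))
    (hZQcard : Nat.card ZQ = q)
    (ZP : Subgroup B)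
    (hZP : ZP = (P : Subgroup B) ⊓ Subgroup.centralizer ((P : Subgroup B) : Set B))
    (hZPcard : Nat.card ZP = p)
    -- `C` is cyclic of order `p * q`, embedded in `A` and `B`
    (hC : IsCyclic C) (hCcard : Nat.card C = p * q)
    (ιA : C →* A) (ιB : C →* B)
    (hιA : Function.Injective ιA) (hιB : Function.Injective ιB)
    -- `ιA(C)` is self-normalizing in `A`, contains `Z(Q)` as its unique subgroup of
    -- order `q`, and `A = Q * ιA(C)`
    (hCA_selfnorm : Subgroup.normalizer (ιA.range : Set A) = ιA.range)
    (hZQle : ZQ ≤ ιA.range)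
    (hZQuniq : ∀ D : Subgroup A, D ≤ ιA.range → Nat.card D = q → D = ZQ)
    (hAfact : ∀ a : A, ∃ u ∈ (Q : Subgroup A), ∃ c : C, a = u * ιA c)
    -- `ιB(C)` is self-normalizing in `B`, contains `Z(P)` as its unique subgroup of
    -- order `p`, and `B = P * ιB(C)`
    (hCB_selfnorm : Subgroup.normalizer (ιB.range : Set B) = ιB.range)
    (hZPle : ZP ≤ ιB.range)
    (hZPuniq : ∀ D : Subgroup B, D ≤ ιB.range → Nat.card D = p → D = ZP)
    (hBfact : ∀ b : B, ∃ u ∈ (P : Subgroup B), ∃ c : C, b = u * ιB c)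
    -- `SpA` is the unique subgroup of order `p` of `ιA(C)`, and
    -- `SqB` is the unique subgroup of order `q` of `ιB(C)`
    (SpA : Subgroup A) (hSpA_le : SpA ≤ ιA.range) (hSpA_card : Nat.card SpA = p)
    (hSpA_uniq : ∀ D : Subgroup A, D ≤ ιA.range → Nat.card D = p → D = SpA)
    (SqB : Subgroup B) (hSqB_le : SqB ≤ ιB.range) (hSqB_card : Nat.card SqB = q)
    (hSqB_uniq : ∀ D : Subgroup B, D ≤ ιB.range → Nat.card D = q → D = SqB)
    -- the normalizer conditions `N_B(S_q) = ιB(C)` and `N_A(S_p) = ιA(C)`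
    (hSqB_norm : Subgroup.normalizer (SqB : Set B) = ιB.range)
    (hSpA_norm : Subgroup.normalizer (SpA : Set A) = ιA.range)
    -- the commutator conditions `[Q, S_p] = Q` and `[P, S_q] = P`
    (hQcommutator : ⁅(Q : Subgroup A), SpA⁆ = (Q : Subgroup A))
    (hPcommutator : ⁅(P : Subgroup B), SqB⁆ = (P : Subgroup B))
    :
    ∀ x : Amalgam ιA ιB, x ≠ 1 → {y : Amalgam ιA ιB | IsConj x y}.Infinite :=
  amalgam_conjugacy_classes_infinite_general p q hp hq Q P hQnonab hPnonab hC hCcard ιA ιB hιA hιB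
    hCA_selfnorm hCB_selfnorm SpA hSpA_uniq SqB hSqB_uniq hSqB_norm hSpA_norm
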